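/- arXiv:2007.05154 — 7 statements merged into one kernel-verified Lean document; each statement's English description precedes it below -/
import Mathlib

section
/- Fix real numbers ν₁, ν₂ > 0 such that ν₂⁴/ν₁⁴ is rational, and fix positive integers j₁*, j₂* with ν₁·j₁* ≠ ν₂·j₂*. Assume μ > 0 and m > 0 satisfy: m is rational, μν₁⁴ is rational, m/(μν₁⁴) is not equal to any natural number, m/(μν₂⁴) is not equal to any natural number, the number ((μν₁⁴(j₁*)⁴ + m)/(μν₂⁴(j₂*)⁴ + m))^(1/2) is irrational, and (ν₁²/ν₂²)·((μν₁⁴(j₁*)⁴ + m)/(μν₂⁴(j₂*)⁴ + m))^(1/2) is irrational. Then the set of pairs (j₁, j₂) ∈ ℤ² satisfying the resonance equation is exactly {(j₁*, 0), (−j₁*, 0), (0, j₂*), (0, −j₂*)}. -/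
/-- Lemma 2.2 of the paper: for parameters `(μ, m)` in the set `S̃`, the only integer
solutions of the resonance equation are `(±j₁*, 0)` and `(0, ±j₂*)`. -/
theorem resonance_solutions_S_tilde
    (ν₁ ν₂ μ m : ℝ) (hν₁ : 0 < ν₁) (hν₂ : 0 < ν₂)
    (hratio : ∃ q : ℚ, (q : ℝ) = ν₂ ^ 4 / ν₁ ^ 4)
    (j₁ j₂ : ℕ) (hj₁ : 0 < j₁) (hj₂ : 0 < j₂)
    (hneq : ν₁ * (j₁ : ℝ) ≠ ν₂ * (j₂ : ℝ))
    (hμ : 0 < μ) (hm : 0 < m)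
    (hmQ : ∃ q : ℚ, (q : ℝ) = m)
    (hμν : ∃ q : ℚ, (q : ℝ) = μ * ν₁ ^ 4)
    (h1 : ∀ n : ℕ, m / (μ * ν₁ ^ 4) ≠ (n : ℝ))
    (h2 : ∀ n : ℕ, m / (μ * ν₂ ^ 4) ≠ (n : ℝ))
    (h3 : Irrational (Real.sqrt ((μ * ν₁ ^ 4 * (j₁ : ℝ) ^ 4 + m) /
      (μ * ν₂ ^ 4 * (j₂ : ℝ) ^ 4 + m))))
    (h4 : Irrational ((ν₁ ^ 2 / ν₂ ^ 2) * Real.sqrt ((μ * ν₁ ^ 4 * (j₁ : ℝ) ^ 4 + m) /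
      (μ * ν₂ ^ 4 * (j₂ : ℝ) ^ 4 + m)))) :
    {j : ℤ × ℤ |
        -(Real.sqrt ((μ * ν₁ ^ 4 * (j₁ : ℝ) ^ 4 + m) / (j₁ : ℝ) ^ 2) * (j.1 : ℝ) +
              Real.sqrt ((μ * ν₂ ^ 4 * (j₂ : ℝ) ^ 4 + m) / (j₂ : ℝ) ^ 2) * (j.2 : ℝ)) ^ 2 +
            μ * (ν₁ ^ 2 * (j.1 : ℝ) ^ 2 + ν₂ ^ 2 * (j.2 : ℝ) ^ 2) ^ 2 + m = 0} =
      {((j₁ : ℤ), 0), (-(j₁ : ℤ), 0), (0, (j₂ : ℤ)), (0, -(j₂ : ℤ))} := by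
  obtain ⟨qr, hqr⟩ := hratio
  obtain ⟨qm, hqm⟩ := hmQ
  obtain ⟨qa, hqa⟩ := hμν
  have hν₁0 : ν₁ ≠ 0 := ne_of_gt hν₁
  have hν₂0 : ν₂ ≠ 0 := ne_of_gt hν₂
  have hJ1 : (0:ℝ) < (j₁:ℝ) := by exact_mod_cast hj₁
  have hJ2 : (0:ℝ) < (j₂:ℝ) := by exact_mod_cast hj₂
  have hb' : (qa:ℝ) * (qr:ℝ) = μ * ν₂ ^ 4 := by
    rw [hqa, hqr]; field_simp
  set A := μ * ν₁ ^ 4 * (j₁ : ℝ) ^ 4 + m with hA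
  set B := μ * ν₂ ^ 4 * (j₂ : ℝ) ^ 4 + m with hB
  have hA0 : 0 < A := by rw [hA]; positivity
  have hB0 : 0 < B := by rw [hB]; positivity
  set t := Real.sqrt (A / B) with ht
  have ht2 : t ^ 2 = A / B := Real.sq_sqrt (by positivity)
  set qA : ℚ := qa * (j₁:ℚ) ^ 4 + qm with hqAdef
  set qB : ℚ := qa * qr * (j₂:ℚ) ^ 4 + qm with hqBdef
  have hqA : (qA:ℝ) = A := by
    rw [hqAdef, hA]; push_cast; linear_combination (j₁:ℝ)^4 * hqa + hqm
  have hqB : (qB:ℝ) = B := by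
    rw [hqBdef, hB]; push_cast; linear_combination (j₂:ℝ)^4 * hb' + hqm
  ext ⟨k₁, k₂⟩
  simp only [Set.mem_setOf_eq, Set.mem_insert_iff, Set.mem_singleton_iff, Prod.mk.injEq]
  set ω₁ := Real.sqrt (A / (j₁ : ℝ) ^ 2) with hω₁
  set ω₂ := Real.sqrt (B / (j₂ : ℝ) ^ 2) with hω₂
  have hω₁sq : ω₁ ^ 2 * (j₁:ℝ) ^ 2 = A := by
    rw [hω₁, Real.sq_sqrt (by positivity)]; field_simp
  have hω₂sq : ω₂ ^ 2 * (j₂:ℝ) ^ 2 = B := by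
    rw [hω₂, Real.sq_sqrt (by positivity)]; field_simp
  have hsB : Real.sqrt B * Real.sqrt B = B := Real.mul_self_sqrt hB0.le
  have e1 : ω₁ * (j₁:ℝ) = Real.sqrt A := by
    rw [hω₁, Real.sqrt_div hA0.le, Real.sqrt_sq hJ1.le, div_mul_cancel₀]
    exact ne_of_gt hJ1
  have e2 : ω₂ * (j₂:ℝ) = Real.sqrt B := by
    rw [hω₂, Real.sqrt_div hB0.le, Real.sqrt_sq hJ2.le, div_mul_cancel₀]
    exact ne_of_gt hJ2
  have e3 : t * Real.sqrt B = Real.sqrt A := by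
    rw [ht, Real.sqrt_div hA0.le, div_mul_cancel₀]
    exact Real.sqrt_ne_zero'.mpr hB0
  have hprod : ω₁ * ω₂ * ((j₁:ℝ) * (j₂:ℝ)) = t * B := by
    have h5 : (ω₁ * (j₁:ℝ)) * (ω₂ * (j₂:ℝ)) = (t * Real.sqrt B) * Real.sqrt B := by
      rw [e1, e2, e3]
    linear_combination h5 + t * hsB
  constructor
  · intro h
    by_cases hk2 : k₂ = 0
    · subst hk2
      have e : (μ*ν₁^4*(j₁:ℝ)^2*(k₁:ℝ)^2 - m) * ((k₁:ℝ)^2 - (j₁:ℝ)^2) = 0 := by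
        push_cast at h
        linear_combination ((j₁:ℝ)^2) * h + ((k₁:ℝ)^2) * hω₁sq + ((k₁:ℝ)^2) * hA
      rcases mul_eq_zero.mp e with e | e
      · exfalso
        apply h1 (j₁ ^ 2 * k₁.natAbs ^ 2)
        rw [div_eq_iff (by positivity : μ * ν₁ ^ 4 ≠ 0)]
        have hnorm : ((k₁.natAbs : ℝ))^2 = (k₁:ℝ)^2 := by
          rw [Nat.cast_natAbs, Int.cast_abs, sq_abs]
        push_cast
        rw [hnorm]
        linear_combination -e
      · have he2 : (k₁:ℝ)^2 = (j₁:ℝ)^2 := by linarith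
        rcases sq_eq_sq_iff_eq_or_eq_neg.mp he2 with h' | h'
        · exact Or.inl ⟨by exact_mod_cast h', rfl⟩
        · exact Or.inr (Or.inl ⟨by exact_mod_cast h', rfl⟩)
    · by_cases hk1 : k₁ = 0
      · subst hk1
        have e : (μ*ν₂^4*(j₂:ℝ)^2*(k₂:ℝ)^2 - m) * ((k₂:ℝ)^2 - (j₂:ℝ)^2) = 0 := by
          push_cast at h
          linear_combination ((j₂:ℝ)^2) * h + ((k₂:ℝ)^2) * hω₂sq + ((k₂:ℝ)^2) * hB
        rcases mul_eq_zero.mp e with e | e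
        · exfalso
          apply h2 (j₂ ^ 2 * k₂.natAbs ^ 2)
          rw [div_eq_iff (by positivity : μ * ν₂ ^ 4 ≠ 0)]
          have hnorm : ((k₂.natAbs : ℝ))^2 = (k₂:ℝ)^2 := by
            rw [Nat.cast_natAbs, Int.cast_abs, sq_abs]
          push_cast
          rw [hnorm]
          linear_combination -e
        · have he2 : (k₂:ℝ)^2 = (j₂:ℝ)^2 := by linarith
          rcases sq_eq_sq_iff_eq_or_eq_neg.mp he2 with h' | h'
          · exact Or.inr (Or.inr (Or.inl ⟨rfl, by exact_mod_cast h'⟩))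
          · exact Or.inr (Or.inr (Or.inr ⟨rfl, by exact_mod_cast h'⟩))
      · exfalso
        have hK1 : ((k₁:ℝ)) ≠ 0 := Int.cast_ne_zero.mpr hk1
        have hK2 : ((k₂:ℝ)) ≠ 0 := Int.cast_ne_zero.mpr hk2
        set s : ℝ := ν₂^2 / ν₁^2 with hsdef0
        have hsdef : s * ν₁^2 = ν₂^2 := by rw [hsdef0]; field_simp
        have hs2 : s^2 = (qr:ℝ) := by
          rw [hsdef0, hqr, div_pow]; ring
        have master : t * (2 * B * (j₁:ℝ) * (j₂:ℝ) * (k₁:ℝ) * (k₂:ℝ)) =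
            ((j₁:ℝ)^2 * (j₂:ℝ)^2 * (μ*ν₁^4*(k₁:ℝ)^4 + μ*ν₂^4*(k₂:ℝ)^4 + m)
              - A * (j₂:ℝ)^2 * (k₁:ℝ)^2 - B * (j₁:ℝ)^2 * (k₂:ℝ)^2)
            + (2*μ*ν₁^4*(j₁:ℝ)^2*(j₂:ℝ)^2*(k₁:ℝ)^2*(k₂:ℝ)^2) * s := by
          linear_combination (-((j₁:ℝ)^2 * (j₂:ℝ)^2)) * h
            - ((k₁:ℝ)^2 * (j₂:ℝ)^2) * hω₁sq - ((k₂:ℝ)^2 * (j₁:ℝ)^2) * hω₂sq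
            - (2*(k₁:ℝ)*(k₂:ℝ)*(j₁:ℝ)*(j₂:ℝ)) * hprod
            - (2*μ*ν₁^2*(k₁:ℝ)^2*(k₂:ℝ)^2*(j₁:ℝ)^2*(j₂:ℝ)^2) * hsdef
        set D : ℝ := 2 * B * (j₁:ℝ) * (j₂:ℝ) * (k₁:ℝ) * (k₂:ℝ) with hD
        set C : ℝ := 2*μ*ν₁^4*(j₁:ℝ)^2*(j₂:ℝ)^2*(k₁:ℝ)^2*(k₂:ℝ)^2 with hC
        set R₀ : ℝ := (j₁:ℝ)^2 * (j₂:ℝ)^2 * (μ*ν₁^4*(k₁:ℝ)^4 + μ*ν₂^4*(k₂:ℝ)^4 + m)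
          - A * (j₂:ℝ)^2 * (k₁:ℝ)^2 - B * (j₁:ℝ)^2 * (k₂:ℝ)^2 with hR
        have hD0 : D ≠ 0 := by
          rw [hD]
          exact mul_ne_zero (mul_ne_zero (mul_ne_zero (mul_ne_zero (by positivity)
            (ne_of_gt hJ1)) (ne_of_gt hJ2)) hK1) hK2
        set qD : ℚ := 2 * qB * (j₁:ℚ) * (j₂:ℚ) * (k₁:ℚ) * (k₂:ℚ) with hqDdef
        set qC : ℚ := 2 * qa * (j₁:ℚ)^2 * (j₂:ℚ)^2 * (k₁:ℚ)^2 * (k₂:ℚ)^2 with hqCdef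
        set qR : ℚ := (j₁:ℚ)^2 * (j₂:ℚ)^2 * (qa*(k₁:ℚ)^4 + qa*qr*(k₂:ℚ)^4 + qm)
          - qA * (j₂:ℚ)^2 * (k₁:ℚ)^2 - qB * (j₁:ℚ)^2 * (k₂:ℚ)^2 with hqRdef
        have hqD : (qD:ℝ) = D := by
          rw [hqDdef, hD]; push_cast [hqB]; ring
        have hqC : (qC:ℝ) = C := by
          rw [hqCdef, hC]; push_cast
          linear_combination (2*(j₁:ℝ)^2*(j₂:ℝ)^2*(k₁:ℝ)^2*(k₂:ℝ)^2) * hqa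
        have hqR : (qR:ℝ) = R₀ := by
          rw [hqRdef, hR]; push_cast [hqA, hqB]
          linear_combination ((j₁:ℝ)^2*(j₂:ℝ)^2*(k₁:ℝ)^4) * hqa
            + ((j₁:ℝ)^2*(j₂:ℝ)^2*(k₂:ℝ)^4) * hb' + ((j₁:ℝ)^2*(j₂:ℝ)^2) * hqm
        have hCs : C * s = t * D - R₀ := by
          rw [hC, hD, hR]; linear_combination -master
        have hsq : t * (2 * D * R₀) = (A/B) * D^2 + R₀^2 - C^2 * (qr:ℝ) := by
          linear_combination (C*s + t*D - R₀) * hCs - C^2 * hs2 + D^2 * ht2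
        by_cases hR0 : qR = 0
        · have hR0' : R₀ = 0 := by rw [← hqR]; exact_mod_cast hR0
          refine h4 ⟨qC / qD, ?_⟩
          push_cast
          rw [hqC, hqD, div_eq_iff hD0]
          field_simp
          linear_combination ν₁^2 * hCs - C * hsdef - ν₁^2 * hR0'
        · have hR' : R₀ ≠ 0 := by rw [← hqR]; exact_mod_cast hR0
          have h2DR : 2 * D * R₀ ≠ 0 :=
            mul_ne_zero (mul_ne_zero two_ne_zero hD0) hR'
          set qE : ℚ := qA/qB*qD^2 + qR^2 - qC^2*qr with hqEdef
          have hqE : (qE:ℝ) = (A/B)*D^2 + R₀^2 - C^2*(qr:ℝ) := by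
            rw [hqEdef]; push_cast [hqA, hqB, hqC, hqD, hqR]; ring
          refine h3 ⟨qE / (2 * qD * qR), ?_⟩
          push_cast
          rw [hqE, hqD, hqR, div_eq_iff h2DR]
          linear_combination -hsq
  · rintro (⟨ha, hb2⟩ | ⟨ha, hb2⟩ | ⟨ha, hb2⟩ | ⟨ha, hb2⟩) <;> subst ha <;> subst hb2 <;>
      push_cast
    · linear_combination -hω₁sq - hA
    · linear_combination -hω₁sq - hA
    · linear_combination -hω₂sq - hB
    · linear_combination -hω₂sq - hB
end

section
/- Fix real numbers ν₁, ν₂ > 0 such that ν₂⁴/ν₁⁴ is rational, and fix positive integers j₁*, j₂* with ν₁·j₁* ≠ ν₂·j₂*. Then the set S̃ of pairs (μ, m) ∈ (0,∞) × (0,∞) such that m is rational, μν₁⁴ is rational, m/(μν₁⁴) is not equal to any natural number, m/(μν₂⁴) is not equal to any natural number, ((μν₁⁴(j₁*)⁴ + m)/(μν₂⁴(j₂*)⁴ + m))^(1/2) is irrational, and (ν₁²/ν₂²)·((μν₁⁴(j₁*)⁴ + m)/(μν₂⁴(j₂*)⁴ + m))^(1/2) is irrational, is dense in (0,∞) ×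 (0,∞) (with the product topology inherited from ℝ²). -/
/-!
Write `μ ν₁⁴ = Q` and `m = Q t` with `Q, t` rational. Then `m / (μ ν₁⁴) = t`,
`m / (μ ν₂⁴) = t / r` with `r = ν₂⁴ / ν₁⁴ ∈ ℚ`, and the quotient under the square root is
`x = (a + t) / (b + t)` with `a = j₁⁴`, `b = r j₂⁴`; moreover `(ν₁² / ν₂²) √x = √(x / r)`.
Since `ν₁ j₁ ≠ ν₂ j₂` gives `a ≠ b`, the map `t ↦ x` is a Möbius transformation defined over `ℚ`,
so it suffices to find rationals `x`, densely in `(0, ∞)`, with `√x` and `√(x / r)` irrational: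
`x = k / ℓ` with `ℓ` a large prime not dividing `k` works, as `x` and `x / r` have `ℓ`-adic
valuation `-1`. The conditions `t ∉ ℕ` and `t / r ∉ ℕ` only remove a closed countable set.
-/

open Set

theorem irrational_sqrt_of_odd_padicValRat {p : ℕ} [Fact p.Prime] {q : ℚ} (hq : 0 ≤ q)
    (hodd : Odd (padicValRat p q)) : Irrational √(q : ℝ) := by
  rw [irrational_sqrt_ratCast_iff_of_nonneg hq]
  rintro ⟨y, rfl⟩
  have hy : y ≠ 0 := by rintro rfl; simp at hodd
  rw [padicValRat.mul hy hy] at hodd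
  exact Int.not_even_iff_odd.mpr hodd ⟨_, rfl⟩

theorem padicValRat_eq_zero_of_not_dvd {p : ℕ} {q : ℚ} (hnum : ¬(p : ℤ) ∣ q.num)
    (hden : ¬p ∣ q.den) : padicValRat p q = 0 := by
  rw [padicValRat_def, padicValInt.eq_zero_of_not_dvd hnum, padicValNat.eq_zero_of_not_dvd hden]
  rfl

theorem exists_int_not_dvd_abs_sub_le {n : ℕ} (hn : n ≠ 1) (y : ℝ) :
    ∃ k : ℤ, ¬(n : ℤ) ∣ k ∧ |k - y| ≤ 1 := by
  have hle := Int.floor_le y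
  have hlt := Int.lt_floor_add_one y
  by_cases h : (n : ℤ) ∣ ⌊y⌋
  · refine ⟨⌊y⌋ + 1, fun h' => hn (Nat.dvd_one.mp ?_), ?_⟩
    · exact_mod_cast (Int.dvd_add_right h).mp h'
    · rw [abs_le]; push_cast; constructor <;> linarith
  · exact ⟨⌊y⌋, h, by rw [abs_le]; constructor <;> linarith⟩

theorem exists_padicValRat_eq_neg_one_near {p : ℕ} [hp : Fact p.Prime] (y : ℝ) :
    ∃ q : ℚ, padicValRat p q = -1 ∧ |(q : ℝ) - y| ≤ 1 / p := by
  have hp0 : (0 : ℝ) < p := by exact_mod_cast hp.out.pos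
  obtain ⟨k, hk, hky⟩ := exists_int_not_dvd_abs_sub_le hp.out.ne_one (p * y)
  refine ⟨k / p, ?_, ?_⟩
  · have hk0 : (k : ℚ) ≠ 0 := by rintro h; exact hk (by simp_all)
    rw [padicValRat.div hk0 (by exact_mod_cast hp.out.ne_zero), padicValRat.of_int,
      padicValInt.eq_zero_of_not_dvd hk, padicValRat.self hp.out.one_lt]
    rfl
  · have hdiff : ((k / p : ℚ) : ℝ) - y = (k - p * y) / p := by push_cast; field_simp
    rw [hdiff, abs_div, abs_of_pos hp0]
    exact div_le_div_of_nonneg_right hky hp0.le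

theorem Ioi_subset_closure_irrational_sqrt {r : ℚ} (hr : 0 < r) :
    Ioi (0 : ℝ) ⊆
      closure ({x : ℝ | Irrational √x ∧ Irrational √(x / r)} ∩ range ((↑) : ℚ → ℝ)) := by
  intro x hx
  rw [Metric.mem_closure_iff]
  intro ε hε
  set δ := min ε x
  have hδ : 0 < δ := lt_min hε hx
  obtain ⟨p, hp_ge, hp⟩ :=
    Nat.exists_infinite_primes (max (r.num.natAbs + r.den) ⌈1 / δ⌉₊ + 1)
  have : Fact p.Prime := ⟨hp⟩
  have hp0 : (0 : ℝ) < p := by exact_mod_cast hp.pos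
  have hpδ : 1 / (p : ℝ) < δ := by
    rw [one_div_lt hp0 hδ]
    exact (Nat.le_ceil _).trans_lt (by exact_mod_cast (le_max_right _ _).trans_lt hp_ge)
  obtain ⟨q, hq, hqx⟩ := exists_padicValRat_eq_neg_one_near (p := p) x
  have hqx : |(q : ℝ) - x| < δ := hqx.trans_lt hpδ
  have hq0 : 0 < q := by
    have := (abs_lt.mp hqx).1
    have : δ ≤ x := min_le_right _ _
    exact_mod_cast (by linarith : (0 : ℝ) < q)
  have hr_val : padicValRat p r = 0 := by
    have hlt : r.num.natAbs + r.den < p := by omega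
    refine padicValRat_eq_zero_of_not_dvd ?_ (Nat.not_dvd_of_pos_of_lt r.pos (by omega))
    rw [Int.natCast_dvd]
    exact Nat.not_dvd_of_pos_of_lt (Int.natAbs_pos.mpr (Rat.num_ne_zero.mpr hr.ne')) (by omega)
  have hqr : padicValRat p (q / r) = -1 := by
    rw [padicValRat.div hq0.ne' hr.ne', hq, hr_val]
    rfl
  refine ⟨q, ⟨⟨irrational_sqrt_of_odd_padicValRat hq0.le (by rw [hq]; decide), ?_⟩, q, rfl⟩, ?_⟩
  · exact_mod_cast irrational_sqrt_of_odd_padicValRat (div_pos hq0 hr).le (by rw [hqr]; decide)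
  · rw [Real.dist_eq, abs_sub_comm]
    exact hqx.trans_le (min_le_left _ _)

theorem div_add_div_sub_one_eq {K : Type*} [Field K] {a b x : K} (hab : a ≠ b) (hx : x ≠ 1) :
    (a + (a - b * x) / (x - 1)) / (b + (a - b * x) / (x - 1)) = x := by
  have hx1 : x - 1 ≠ 0 := sub_ne_zero.mpr hx
  have hnum : a + (a - b * x) / (x - 1) = x * (a - b) / (x - 1) := by field_simp; ring
  have hden : b + (a - b * x) / (x - 1) = (a - b) / (x - 1) := by field_simp; ring
  rw [hnum, hden, mul_div_assoc, mul_div_cancel_right₀ _ (div_ne_zero (sub_ne_zero.mpr hab) hx1)]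

theorem Ioi_subset_closure_mobius_preimage {a b : ℚ} (ha : 0 ≤ a) (hb : 0 ≤ b) (hab : a ≠ b)
    {Y : Set ℝ} (hY : Ioi 0 ⊆ closure (Y ∩ range ((↑) : ℚ → ℝ))) :
    Ioi 0 ⊆ closure {t : ℝ | 0 < t ∧ t ∈ range ((↑) : ℚ → ℝ) ∧ (a + t) / (b + t) ∈ Y} := by
  intro t (ht : 0 < t)
  have hbt : (0 : ℝ) < b + t := by positivity
  have hab' : (a : ℝ) ≠ b := by exact_mod_cast hab
  let ψ : ℝ → ℝ := fun x => (a - b * x) / (x - 1)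
  have hx1 : (a + t) / (b + t) ≠ (1 : ℝ) := by
    rw [Ne, div_eq_one_iff_eq hbt.ne']
    exact fun h => hab' (add_right_cancel h)
  have hψx : ψ ((a + t) / (b + t)) = t := by
    simp only [ψ]
    rw [div_eq_iff (sub_ne_zero.mpr hx1)]
    field_simp
    ring
  have hψ : ContinuousAt ψ ((a + t) / (b + t)) :=
    (by fun_prop : Continuous fun x : ℝ => (a - b * x)).continuousAt.div
      (by fun_prop) (sub_ne_zero.mpr hx1)
  have := mem_closure_image hψ (hY (by positivity : (0 : ℝ) < (a + t) / (b + t)))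
  rw [hψx] at this
  refine closure_mono ?_ (isOpen_Ioi.inter_closure ⟨ht, this⟩)
  rintro _ ⟨hψq, q, ⟨hqY, q, rfl⟩, rfl⟩
  -- `ψ 1 = 0`, so positivity of `ψ q` rules out the pole `q = 1`
  have hq1 : (q : ℝ) ≠ 1 := by
    rintro h
    simp [ψ, h] at hψq
  refine ⟨hψq, ⟨(a - b * q) / (q - 1), by push_cast; rfl⟩, ?_⟩
  simpa only [ψ, div_add_div_sub_one_eq hab' hq1] using hqY

theorem IsOpen.subset_closure_inter_of_dense {X : Type*} [TopologicalSpace X] {U s t : Set X}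
    (hU : IsOpen U) (hs : U ⊆ closure s) (ht : Dense t) (hto : IsOpen t) :
    U ⊆ closure (s ∩ t) :=
  calc U ⊆ closure (U ∩ t) := ht.open_subset_closure_inter hU
    _ ⊆ closure (closure s ∩ t) := closure_mono (inter_subset_inter_left _ hs)
    _ ⊆ closure (closure (s ∩ t)) := closure_mono hto.closure_inter
    _ = closure (s ∩ t) := closure_closure

theorem isOpen_setOf_div_ne_natCast (c : ℝ) : IsOpen {t : ℝ | ∀ n : ℕ, t / c ≠ n} := by
  have := Nat.isClosedEmbedding_coe_real.isClosed_range.isOpen_compl.preimage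
    (continuous_id.div_const c)
  simpa [Set.preimage, eq_comm] using this

theorem dense_setOf_div_ne_natCast {c : ℝ} (hc : c ≠ 0) : Dense {t : ℝ | ∀ n : ℕ, t / c ≠ n} := by
  have hcount : {t : ℝ | ∃ n : ℕ, t / c = n}.Countable := by
    refine (countable_range fun n : ℕ => c * n).mono ?_
    rintro t ⟨n, hn⟩
    exact ⟨n, by simp only [← hn, mul_div_cancel₀ _ hc]⟩
  simpa [compl_ofPred] using hcount.dense_compl ℝ

theorem Ioi_prod_Ioi_subset_image {c : ℝ} (hc : 0 < c) :
    Ioi 0 ×ˢ Ioi 0 ⊆ (fun p : ℝ × ℝ => (p.1 / c, p.1 * p.2)) '' (Ioi 0 ×ˢ Ioi 0) := by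
  rintro ⟨μ, m⟩ ⟨hμ : 0 < μ, hm : 0 < m⟩
  refine ⟨(μ * c, m / (μ * c)), ⟨mul_pos hμ hc, div_pos hm (mul_pos hμ hc)⟩, ?_⟩
  simp only [Prod.mk.injEq]
  constructor <;> field_simp

theorem pow_four_ne_mul_pow_four_of_mul_ne {ν₁ ν₂ : ℝ} (hν₁ : 0 < ν₁) (hν₂ : 0 < ν₂) {r : ℚ}
    (hr : (r : ℝ) = ν₂ ^ 4 / ν₁ ^ 4) {j₁ j₂ : ℕ} (hneq : ν₁ * (j₁ : ℝ) ≠ ν₂ * (j₂ : ℝ)) :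
    (j₁ ^ 4 : ℚ) ≠ r * j₂ ^ 4 := by
  intro h
  have h4 : (ν₁ * j₁) ^ 4 = (ν₂ * j₂) ^ 4 := by
    have := congrArg ((↑) : ℚ → ℝ) h
    push_cast [hr] at this
    field_simp at this
    linear_combination this
  exact hneq ((pow_left_inj₀ (by positivity) (by positivity) four_ne_zero).mp h4)

def sTilde (ν₁ ν₂ : ℝ) (j₁ j₂ : ℕ) : Set (ℝ × ℝ) :=
  {p : ℝ × ℝ | p.1 ∈ Set.Ioi (0 : ℝ) ∧ p.2 ∈ Set.Ioi (0 : ℝ) ∧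
    (∃ q : ℚ, (q : ℝ) = p.2) ∧
    (∃ q : ℚ, (q : ℝ) = p.1 * ν₁ ^ 4) ∧
    (∀ n : ℕ, p.2 / (p.1 * ν₁ ^ 4) ≠ (n : ℝ)) ∧
    (∀ n : ℕ, p.2 / (p.1 * ν₂ ^ 4) ≠ (n : ℝ)) ∧
    Irrational (Real.sqrt ((p.1 * ν₁ ^ 4 * (j₁ : ℝ) ^ 4 + p.2) /
      (p.1 * ν₂ ^ 4 * (j₂ : ℝ) ^ 4 + p.2))) ∧
    Irrational ((ν₁ ^ 2 / ν₂ ^ 2) * Real.sqrt ((p.1 * ν₁ ^ 4 * (j₁ : ℝ) ^ 4 + p.2) /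
      (p.1 * ν₂ ^ 4 * (j₂ : ℝ) ^ 4 + p.2)))}

def reducedParams (a b r : ℚ) : Set ℝ :=
  {t | 0 < t ∧ (∃ q : ℚ, (q : ℝ) = t) ∧ (∀ n : ℕ, t ≠ n) ∧ (∀ n : ℕ, t / r ≠ n) ∧
    Irrational √((a + t) / (b + t)) ∧ Irrational √((a + t) / (b + t) / r)}

theorem Ioi_subset_closure_reducedParams {a b r : ℚ} (ha : 0 ≤ a) (hb : 0 ≤ b) (hab : a ≠ b)
    (hr : 0 < r) : Ioi 0 ⊆ closure (reducedParams a b r) := by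
  have hrat :=
    Ioi_subset_closure_mobius_preimage ha hb hab (Ioi_subset_closure_irrational_sqrt hr)
  have hopen := (isOpen_setOf_div_ne_natCast 1).inter (isOpen_setOf_div_ne_natCast r)
  have hdense := (dense_setOf_div_ne_natCast one_ne_zero).inter_of_isOpen_left
    (dense_setOf_div_ne_natCast (Rat.cast_ne_zero.mpr hr.ne')) (isOpen_setOf_div_ne_natCast 1)
  refine (isOpen_Ioi.subset_closure_inter_of_dense hrat hdense hopen).trans (closure_mono ?_)
  rintro t ⟨⟨ht, hq, hY₁, hY₂⟩, hn₁, hn₂⟩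
  exact ⟨ht, hq, by simpa using hn₁, hn₂, hY₁, hY₂⟩

theorem mk_mem_sTilde {ν₁ ν₂ : ℝ} (hν₁ : ν₁ ≠ 0) {r : ℚ} (hr : (r : ℝ) = ν₂ ^ 4 / ν₁ ^ 4)
    (j₁ j₂ : ℕ) {Q : ℚ} (hQ : 0 < Q) {t : ℝ} (ht : t ∈ reducedParams (j₁ ^ 4) (r * j₂ ^ 4) r) :
    ((Q : ℝ) / ν₁ ^ 4, Q * t) ∈ sTilde ν₁ ν₂ j₁ j₂ := by
  obtain ⟨ht, ⟨s, rfl⟩, hn₁, hn₂, hirr₁, hirr₂⟩ := ht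
  have hQ : (0 : ℝ) < Q := by exact_mod_cast hQ
  have hμ₁ : (Q : ℝ) / ν₁ ^ 4 * ν₁ ^ 4 = Q := by field_simp
  have hμ₂ : (Q : ℝ) / ν₁ ^ 4 * ν₂ ^ 4 = Q * r := by rw [hr]; field_simp
  have hratio : ((Q : ℝ) / ν₁ ^ 4 * ν₁ ^ 4 * j₁ ^ 4 + Q * s) /
      ((Q : ℝ) / ν₁ ^ 4 * ν₂ ^ 4 * j₂ ^ 4 + Q * s) =
      (((j₁ ^ 4 : ℚ) : ℝ) + s) / (((r * j₂ ^ 4 : ℚ) : ℝ) + s) := by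
    rw [hμ₁, hμ₂, mul_assoc, ← mul_add, ← mul_add, mul_div_mul_left _ _ hQ.ne']
    push_cast
    rfl
  have hsqrt_r : ∀ x : ℝ, ν₁ ^ 2 / ν₂ ^ 2 * √x = √(x / r) := by
    intro x
    rw [hr, Real.sqrt_div' _ (by positivity), show ν₂ ^ 4 / ν₁ ^ 4 = (ν₂ ^ 2 / ν₁ ^ 2) ^ 2 by ring,
      Real.sqrt_sq (by positivity), div_div_eq_mul_div]
    ring
  refine ⟨div_pos hQ (by positivity), mul_pos hQ ht, ⟨Q * s, by push_cast; rfl⟩, ⟨Q, hμ₁.symm⟩,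
    fun n => ?_, fun n => ?_, ?_, ?_⟩
  · rw [hμ₁, mul_div_cancel_left₀ _ hQ.ne']
    exact hn₁ n
  · rw [hμ₂, mul_div_mul_left _ _ hQ.ne']
    exact hn₂ n
  · rwa [hratio]
  · rwa [hratio, hsqrt_r]

theorem S_tilde_dense_general
    (ν₁ ν₂ : ℝ) (hν₁ : 0 < ν₁) (hν₂ : 0 < ν₂)
    (hratio : ∃ q : ℚ, (q : ℝ) = ν₂ ^ 4 / ν₁ ^ 4)
    (j₁ j₂ : ℕ)
    (hneq : ν₁ * (j₁ : ℝ) ≠ ν₂ * (j₂ : ℝ)) :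
    Set.Ioi (0 : ℝ) ×ˢ Set.Ioi (0 : ℝ) ⊆
      closure {p : ℝ × ℝ | p.1 ∈ Set.Ioi (0 : ℝ) ∧ p.2 ∈ Set.Ioi (0 : ℝ) ∧
        (∃ q : ℚ, (q : ℝ) = p.2) ∧
        (∃ q : ℚ, (q : ℝ) = p.1 * ν₁ ^ 4) ∧
        (∀ n : ℕ, p.2 / (p.1 * ν₁ ^ 4) ≠ (n : ℝ)) ∧
        (∀ n : ℕ, p.2 / (p.1 * ν₂ ^ 4) ≠ (n : ℝ)) ∧
        Irrational (Real.sqrt ((p.1 * ν₁ ^ 4 * (j₁ : ℝ) ^ 4 + p.2) /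
          (p.1 * ν₂ ^ 4 * (j₂ : ℝ) ^ 4 + p.2))) ∧
        Irrational ((ν₁ ^ 2 / ν₂ ^ 2) * Real.sqrt ((p.1 * ν₁ ^ 4 * (j₁ : ℝ) ^ 4 + p.2) /
          (p.1 * ν₂ ^ 4 * (j₂ : ℝ) ^ 4 + p.2)))} := by
  obtain ⟨r, hr⟩ := hratio
  have hr0 : 0 < r := Rat.cast_pos.mp (by rw [hr]; positivity)
  let Φ : ℝ × ℝ → ℝ × ℝ := fun p => (p.1 / ν₁ ^ 4, p.1 * p.2)
  set T := reducedParams (j₁ ^ 4) (r * j₂ ^ 4) r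
  have hdense : Ioi 0 ×ˢ Ioi 0 ⊆ closure ((Ioi 0 ∩ range ((↑) : ℚ → ℝ)) ×ˢ T) := by
    rw [closure_prod_eq]
    exact prod_mono (Rat.denseRange_cast.open_subset_closure_inter isOpen_Ioi)
      (Ioi_subset_closure_reducedParams (by positivity) (by positivity)
        (pow_four_ne_mul_pow_four_of_mul_ne hν₁ hν₂ hr hneq) hr0)
  have hmaps : MapsTo Φ ((Ioi 0 ∩ range ((↑) : ℚ → ℝ)) ×ˢ T) (sTilde ν₁ ν₂ j₁ j₂) := by
    rintro ⟨_, t⟩ ⟨⟨hQ : (0 : ℝ) < _, Q, rfl⟩, ht⟩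
    exact mk_mem_sTilde hν₁.ne' hr j₁ j₂ (Rat.cast_pos.mp hQ) ht
  calc Ioi 0 ×ˢ Ioi 0 ⊆ Φ '' (Ioi 0 ×ˢ Ioi 0) := Ioi_prod_Ioi_subset_image (by positivity)
    _ ⊆ Φ '' closure _ := image_mono hdense
    _ ⊆ closure (Φ '' _) := image_closure_subset_closure_image (by fun_prop)
    _ ⊆ closure (sTilde ν₁ ν₂ j₁ j₂) := closure_mono hmaps.image_subset

/-- Lemma 2.4 of the paper: the set `S̃` of model parameters `(μ, m)` is dense in
`(0,∞) × (0,∞)`. -/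
theorem S_tilde_dense
    (ν₁ ν₂ : ℝ) (hν₁ : 0 < ν₁) (hν₂ : 0 < ν₂)
    (hratio : ∃ q : ℚ, (q : ℝ) = ν₂ ^ 4 / ν₁ ^ 4)
    (j₁ j₂ : ℕ) (hj₁ : 0 < j₁) (hj₂ : 0 < j₂)
    (hneq : ν₁ * (j₁ : ℝ) ≠ ν₂ * (j₂ : ℝ)) :
    Set.Ioi (0 : ℝ) ×ˢ Set.Ioi (0 : ℝ) ⊆
      closure {p : ℝ × ℝ | p.1 ∈ Set.Ioi (0 : ℝ) ∧ p.2 ∈ Set.Ioi (0 : ℝ) ∧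
        (∃ q : ℚ, (q : ℝ) = p.2) ∧
        (∃ q : ℚ, (q : ℝ) = p.1 * ν₁ ^ 4) ∧
        (∀ n : ℕ, p.2 / (p.1 * ν₁ ^ 4) ≠ (n : ℝ)) ∧
        (∀ n : ℕ, p.2 / (p.1 * ν₂ ^ 4) ≠ (n : ℝ)) ∧
        Irrational (Real.sqrt ((p.1 * ν₁ ^ 4 * (j₁ : ℝ) ^ 4 + p.2) /
          (p.1 * ν₂ ^ 4 * (j₂ : ℝ) ^ 4 + p.2))) ∧
        Irrational ((ν₁ ^ 2 / ν₂ ^ 2) * Real.sqrt ((p.1 * ν₁ ^ 4 * (j₁ : ℝ) ^ 4 + p.2) /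
          (p.1 * ν₂ ^ 4 * (j₂ : ℝ) ^ 4 + p.2)))} :=
  S_tilde_dense_general ν₁ ν₂ hν₁ hν₂ hratio j₁ j₂ hneq
end

section
/- Fix real numbers ν₁, ν₂ > 0 such that ν₁⁴ is rational, ν₂⁴ is rational and ν₂²/ν₁² is rational, and fix positive integers j₁*, j₂* with ν₁·j₁* ≠ ν₂·j₂*. Assume μ > 0 and m > 0 satisfy: μ² is rational, m² is rational, and m/μ is irrational. Then the set of pairs (j₁, j₂) ∈ ℤ² satisfying the resonance equation is exactly {(j₁*, 0), (−j₁*, 0), (0, j₂*), (0, −j₂*)}. -/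
/-! Write `(k₁, k₂)` for a solution and `jᵢ` for `jᵢ*`, so that `ωᵢ² jᵢ² = μ νᵢ⁴ jᵢ⁴ + m`.
If `k₁ = 0`, the equation becomes `(k₂² - j₂²) (μ ν₂⁴ j₂² k₂² - m) = 0`, and the second factor
vanishing would make `m / μ` rational; symmetrically if `k₂ = 0`.

If `k₁ k₂ ≠ 0`, put `Pᵢ = νᵢ² jᵢ²` and `xᵢ = kᵢ² / jᵢ²`. Isolating the cross term
`2 ω₁ω₂ k₁k₂ = μ U + m V`, with `U = (P₁x₁ + P₂x₂)² - P₁²x₁ - P₂²x₂` and `V = 1 - x₁ - x₂`, and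
squaring gives a quadratic form in `(μ, m)` with rational coefficients that vanishes. As `μ²` and
`m²` are rational while `μ m = μ² (m / μ)` is not, its `μ m`-coefficient vanishes:
`U V = 2 x₁x₂ (P₁² + P₂²)`. But the difference of the two sides is a sum of squares with positive
weights. -/

noncomputable abbrev ratSubfield : Subfield ℝ := (Rat.castHom ℝ).fieldRange

lemma mem_ratSubfield {x : ℝ} : x ∈ ratSubfield ↔ ∃ q : ℚ, (q : ℝ) = x :=
  RingHom.mem_fieldRange

lemma irrational_iff_notMem_ratSubfield {x : ℝ} : Irrational x ↔ x ∉ ratSubfield :=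
  mem_ratSubfield.not.symm

lemma Subfield.eq_zero_of_add_mul_eq_zero {F : Type*} [Field F] {K : Subfield F} {z r b : F}
    (hz : z ∉ K) (hr : r ∈ K) (hb : b ∈ K) (h : r + b * z = 0) : b = 0 := by
  by_contra hb0
  refine hz ?_
  rw [show z = -r / b by field_simp; linear_combination h]
  exact div_mem (neg_mem hr) hb

lemma mixed_coeff_lt {P Q x y : ℝ} (hP : 0 < P) (hQ : 0 < Q) (hx : 0 < x) (hy : 0 < y) :
    ((P * x + Q * y) ^ 2 - P ^ 2 * x - Q ^ 2 * y) * (1 - x - y) < 2 * x * y * (P ^ 2 + Q ^ 2) := by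
  have hdiff : 2 * x * y * (P ^ 2 + Q ^ 2)
        - ((P * x + Q * y) ^ 2 - P ^ 2 * x - Q ^ 2 * y) * (1 - x - y)
      = (x * (1 - x) ^ 2 + x ^ 2 * y) * P ^ 2 + (y * (1 - y) ^ 2 + x * y ^ 2) * Q ^ 2
        + x * y * (P - Q) ^ 2 + 2 * x * y * (x + y) * P * Q := by ring
  have hpos : 0 < (x * (1 - x) ^ 2 + x ^ 2 * y) * P ^ 2 + (y * (1 - y) ^ 2 + x * y ^ 2) * Q ^ 2
      + x * y * (P - Q) ^ 2 + 2 * x * y * (x + y) * P * Q := by positivity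
  linarith

lemma false_of_two_mode_resonance_normalized {μ m P Q x y u v : ℝ} (hP : 0 < P) (hQ : 0 < Q)
    (hx : 0 < x) (hy : 0 < y) (hP2 : P ^ 2 ∈ ratSubfield) (hQ2 : Q ^ 2 ∈ ratSubfield)
    (hPQ : P * Q ∈ ratSubfield) (hxK : x ∈ ratSubfield) (hyK : y ∈ ratSubfield)
    (hμ2 : μ ^ 2 ∈ ratSubfield) (hm2 : m ^ 2 ∈ ratSubfield) (hμm : μ * m ∉ ratSubfield)
    (hu : u ^ 2 = (μ * P ^ 2 + m) * x) (hv : v ^ 2 = (μ * Q ^ 2 + m) * y)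
    (h : (u + v) ^ 2 = μ * (P * x + Q * y) ^ 2 + m) : False := by
  obtain ⟨U, hU⟩ : ∃ U, U = (P * x + Q * y) ^ 2 - P ^ 2 * x - Q ^ 2 * y := ⟨_, rfl⟩
  obtain ⟨V, hV⟩ : ∃ V, V = 1 - x - y := ⟨_, rfl⟩
  have h2uv : 2 * (u * v) = μ * U + m * V := by
    rw [hU, hV]; linear_combination h - hu - hv
  have hsq : (μ * U + m * V) ^ 2 = 4 * ((μ * P ^ 2 + m) * x) * ((μ * Q ^ 2 + m) * y) := by
    rw [← h2uv, ← hu, ← hv]; ring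
  have hUK : U ∈ ratSubfield := by
    rw [hU, show (P * x + Q * y) ^ 2 - P ^ 2 * x - Q ^ 2 * y
      = P ^ 2 * x ^ 2 + 2 * (P * Q) * x * y + Q ^ 2 * y ^ 2 - P ^ 2 * x - Q ^ 2 * y by ring]
    apply_rules [sub_mem, add_mem, neg_mem, pow_mem, mul_mem, ofNat_mem]
  have hVK : V ∈ ratSubfield := by
    rw [hV]; apply_rules [sub_mem, one_mem]
  have hcoeff : 4 * x * y * (P ^ 2 + Q ^ 2) - 2 * U * V = 0 := by
    refine Subfield.eq_zero_of_add_mul_eq_zero hμm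
      (r := (4 * (P ^ 2 * Q ^ 2) * x * y - U ^ 2) * μ ^ 2 + (4 * x * y - V ^ 2) * m ^ 2) ?_ ?_ ?_
    · apply_rules [sub_mem, add_mem, neg_mem, pow_mem, mul_mem, ofNat_mem]
    · apply_rules [sub_mem, add_mem, neg_mem, pow_mem, mul_mem, ofNat_mem]
    · linear_combination -hsq
  have hlt := mixed_coeff_lt hP hQ hx hy
  rw [← hU, ← hV] at hlt
  linarith

lemma sq_sqrt_div_sq_mul_sq {A j : ℝ} (hA : 0 ≤ A) (hj : j ≠ 0) : √(A / j ^ 2) ^ 2 * j ^ 2 = A := by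
  rw [Real.sq_sqrt (by positivity), div_mul_cancel₀ _ (pow_ne_zero 2 hj)]

lemma eq_or_eq_neg_of_one_mode_resonance {μ m ν ω : ℝ} {j : ℕ} {k : ℤ} (hμ : μ ≠ 0)
    (hν : ν ^ 4 ∈ ratSubfield) (hmμ : m / μ ∉ ratSubfield)
    (hω : ω ^ 2 * j ^ 2 = μ * ν ^ 4 * j ^ 4 + m)
    (h : -(ω * k) ^ 2 + μ * (ν ^ 2 * k ^ 2) ^ 2 + m = 0) : k = j ∨ k = -j := by
  have hfac : ((k : ℝ) ^ 2 - j ^ 2) * (μ * ν ^ 4 * j ^ 2 * k ^ 2 - m) = 0 := by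
    linear_combination (j : ℝ) ^ 2 * h + (k : ℝ) ^ 2 * hω
  rcases mul_eq_zero.1 hfac with hk | hm
  · have hk' : k ^ 2 = (j : ℤ) ^ 2 := by exact_mod_cast sub_eq_zero.1 hk
    exact sq_eq_sq_iff_eq_or_eq_neg.1 hk'
  · refine absurd ?_ hmμ
    rw [show m / μ = ν ^ 4 * (j : ℝ) ^ 2 * (k : ℝ) ^ 2 by field_simp; linear_combination -hm]
    apply_rules [pow_mem, mul_mem, natCast_mem, intCast_mem]

lemma false_of_two_mode_resonance {μ m ν₁ ν₂ ω₁ ω₂ : ℝ} {j₁ j₂ : ℕ} {k₁ k₂ : ℤ}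
    (hν₁ : ν₁ ≠ 0) (hν₂ : ν₂ ≠ 0) (hj₁ : j₁ ≠ 0) (hj₂ : j₂ ≠ 0) (hk₁ : k₁ ≠ 0) (hk₂ : k₂ ≠ 0)
    (hν₁K : ν₁ ^ 4 ∈ ratSubfield) (hν₂K : ν₂ ^ 4 ∈ ratSubfield)
    (hratio : ν₂ ^ 2 / ν₁ ^ 2 ∈ ratSubfield) (hμ2 : μ ^ 2 ∈ ratSubfield)
    (hm2 : m ^ 2 ∈ ratSubfield) (hμm : μ * m ∉ ratSubfield)
    (hω₁ : ω₁ ^ 2 * j₁ ^ 2 = μ * ν₁ ^ 4 * j₁ ^ 4 + m)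
    (hω₂ : ω₂ ^ 2 * j₂ ^ 2 = μ * ν₂ ^ 4 * j₂ ^ 4 + m)
    (h : -(ω₁ * k₁ + ω₂ * k₂) ^ 2 + μ * (ν₁ ^ 2 * k₁ ^ 2 + ν₂ ^ 2 * k₂ ^ 2) ^ 2 + m = 0) :
    False := by
  have hj₁' : (j₁ : ℝ) ≠ 0 := Nat.cast_ne_zero.2 hj₁
  have hj₂' : (j₂ : ℝ) ≠ 0 := Nat.cast_ne_zero.2 hj₂
  have hk₁' : (k₁ : ℝ) ≠ 0 := Int.cast_ne_zero.2 hk₁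
  have hk₂' : (k₂ : ℝ) ≠ 0 := Int.cast_ne_zero.2 hk₂
  refine false_of_two_mode_resonance_normalized (P := ν₁ ^ 2 * j₁ ^ 2) (Q := ν₂ ^ 2 * j₂ ^ 2)
    (x := k₁ ^ 2 / j₁ ^ 2) (y := k₂ ^ 2 / j₂ ^ 2) (u := ω₁ * k₁) (v := ω₂ * k₂)
    (by positivity) (by positivity) (by positivity) (by positivity) ?_ ?_ ?_ ?_ ?_ hμ2 hm2 hμm
    ?_ ?_ ?_
  · rw [show (ν₁ ^ 2 * j₁ ^ 2) ^ 2 = ν₁ ^ 4 * (j₁ : ℝ) ^ 4 by ring]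
    apply_rules [pow_mem, mul_mem, natCast_mem]
  · rw [show (ν₂ ^ 2 * j₂ ^ 2) ^ 2 = ν₂ ^ 4 * (j₂ : ℝ) ^ 4 by ring]
    apply_rules [pow_mem, mul_mem, natCast_mem]
  · rw [show ν₁ ^ 2 * j₁ ^ 2 * (ν₂ ^ 2 * j₂ ^ 2) = ν₁ ^ 4 * (ν₂ ^ 2 / ν₁ ^ 2) * j₁ ^ 2 * j₂ ^ 2 by
      field_simp]
    apply_rules [pow_mem, mul_mem, natCast_mem]
  · apply_rules [div_mem, pow_mem, natCast_mem, intCast_mem]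
  · apply_rules [div_mem, pow_mem, natCast_mem, intCast_mem]
  · field_simp; linear_combination hω₁
  · field_simp; linear_combination hω₂
  · field_simp; linear_combination -h

theorem resonance_solutions_S_tilde'_general
    (ν₁ ν₂ μ m : ℝ) (hν₁ : 0 < ν₁) (hν₂ : 0 < ν₂)
    (hν₁Q : ∃ q : ℚ, (q : ℝ) = ν₁ ^ 4)
    (hν₂Q : ∃ q : ℚ, (q : ℝ) = ν₂ ^ 4)
    (hratio : ∃ q : ℚ, (q : ℝ) = ν₂ ^ 2 / ν₁ ^ 2)
    (j₁ j₂ : ℕ) (hj₁ : 0 < j₁) (hj₂ : 0 < j₂)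
    (hμ : 0 < μ) (hm : 0 < m)
    (hμ2 : ∃ q : ℚ, (q : ℝ) = μ ^ 2)
    (hm2 : ∃ q : ℚ, (q : ℝ) = m ^ 2)
    (hirr : Irrational (m / μ)) :
    {j : ℤ × ℤ |
        -(Real.sqrt ((μ * ν₁ ^ 4 * (j₁ : ℝ) ^ 4 + m) / (j₁ : ℝ) ^ 2) * (j.1 : ℝ) +
              Real.sqrt ((μ * ν₂ ^ 4 * (j₂ : ℝ) ^ 4 + m) / (j₂ : ℝ) ^ 2) * (j.2 : ℝ)) ^ 2 +
            μ * (ν₁ ^ 2 * (j.1 : ℝ) ^ 2 + ν₂ ^ 2 * (j.2 : ℝ) ^ 2) ^ 2 + m = 0} =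
      {((j₁ : ℤ), 0), (-(j₁ : ℤ), 0), (0, (j₂ : ℤ)), (0, -(j₂ : ℤ))} := by
  have hω₁ := sq_sqrt_div_sq_mul_sq (A := μ * ν₁ ^ 4 * (j₁ : ℝ) ^ 4 + m) (by positivity)
    (Nat.cast_ne_zero.2 hj₁.ne')
  have hω₂ := sq_sqrt_div_sq_mul_sq (A := μ * ν₂ ^ 4 * (j₂ : ℝ) ^ 4 + m) (by positivity)
    (Nat.cast_ne_zero.2 hj₂.ne')
  have hmμ : m / μ ∉ ratSubfield := irrational_iff_notMem_ratSubfield.1 hirr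
  have hν₁K := mem_ratSubfield.2 hν₁Q
  have hν₂K := mem_ratSubfield.2 hν₂Q
  have hμ2K := mem_ratSubfield.2 hμ2
  have hμm : μ * m ∉ ratSubfield := fun h ↦ hmμ <| by
    rw [show m / μ = μ * m / μ ^ 2 by field_simp]
    exact div_mem h hμ2K
  ext ⟨k₁, k₂⟩
  simp only [Set.mem_ofPred_eq, Set.mem_insert_iff, Set.mem_singleton_iff, Prod.mk.injEq]
  constructor
  · intro h
    rcases eq_or_ne k₁ 0 with rfl | hk₁
    · rcases eq_or_eq_neg_of_one_mode_resonance hμ.ne' hν₂K hmμ hω₂ (by simpa using h)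
        with rfl | rfl <;> simp
    rcases eq_or_ne k₂ 0 with rfl | hk₂
    · rcases eq_or_eq_neg_of_one_mode_resonance hμ.ne' hν₁K hmμ hω₁ (by simpa using h)
        with rfl | rfl <;> simp
    exact (false_of_two_mode_resonance hν₁.ne' hν₂.ne' hj₁.ne' hj₂.ne' hk₁ hk₂ hν₁K hν₂K
      (mem_ratSubfield.2 hratio) hμ2K (mem_ratSubfield.2 hm2) hμm hω₁ hω₂ h).elim
  · rintro (⟨rfl, rfl⟩ | ⟨rfl, rfl⟩ | ⟨rfl, rfl⟩ | ⟨rfl, rfl⟩) <;> push_cast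
    · linear_combination -hω₁
    · linear_combination -hω₁
    · linear_combination -hω₂
    · linear_combination -hω₂

/-- Lemma 2.6 of the paper: for parameters `(μ, m)` in the set `S̃'`, the only integer
solutions of the resonance equation are `(±j₁*, 0)` and `(0, ±j₂*)`. -/
theorem resonance_solutions_S_tilde'
    (ν₁ ν₂ μ m : ℝ) (hν₁ : 0 < ν₁) (hν₂ : 0 < ν₂)
    (hν₁Q : ∃ q : ℚ, (q : ℝ) = ν₁ ^ 4)
    (hν₂Q : ∃ q : ℚ, (q : ℝ) = ν₂ ^ 4)
    (hratio : ∃ q : ℚ, (q : ℝ) = ν₂ ^ 2 / ν₁ ^ 2)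
    (j₁ j₂ : ℕ) (hj₁ : 0 < j₁) (hj₂ : 0 < j₂)
    (hneq : ν₁ * (j₁ : ℝ) ≠ ν₂ * (j₂ : ℝ))
    (hμ : 0 < μ) (hm : 0 < m)
    (hμ2 : ∃ q : ℚ, (q : ℝ) = μ ^ 2)
    (hm2 : ∃ q : ℚ, (q : ℝ) = m ^ 2)
    (hirr : Irrational (m / μ)) :
    {j : ℤ × ℤ |
        -(Real.sqrt ((μ * ν₁ ^ 4 * (j₁ : ℝ) ^ 4 + m) / (j₁ : ℝ) ^ 2) * (j.1 : ℝ) +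
              Real.sqrt ((μ * ν₂ ^ 4 * (j₂ : ℝ) ^ 4 + m) / (j₂ : ℝ) ^ 2) * (j.2 : ℝ)) ^ 2 +
            μ * (ν₁ ^ 2 * (j.1 : ℝ) ^ 2 + ν₂ ^ 2 * (j.2 : ℝ) ^ 2) ^ 2 + m = 0} =
      {((j₁ : ℤ), 0), (-(j₁ : ℤ), 0), (0, (j₂ : ℤ)), (0, -(j₂ : ℤ))} :=
  resonance_solutions_S_tilde'_general ν₁ ν₂ μ m hν₁ hν₂ hν₁Q hν₂Q hratio j₁ j₂ hj₁ hj₂ hμ hm hμ2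
    hm2 hirr
end

section
/- Fix real numbers ν₁, ν₂ > 0 such that ν₁⁴ is rational, ν₂⁴ is rational and ν₂²/ν₁² is rational, and fix positive integers j₁*, j₂* with ν₁·j₁* ≠ ν₂·j₂*. If μ > 0 and m > 0 satisfy μ² rational, m² rational and m/μ irrational, then the ratio (μν₁⁴(j₁*)⁴ + m)/(μν₂⁴(j₂*)⁴ + m) is irrational. -/
/-- For `(μ, m)` in the set `S̃'`, the ratio `(μν₁⁴(j₁*)⁴ + m)/(μν₂⁴(j₂*)⁴ + m)`
is irrational. -/
theorem ratio_irrational_S_tilde'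
    (ν₁ ν₂ μ m : ℝ) (hν₁ : 0 < ν₁) (hν₂ : 0 < ν₂)
    (hν₁Q : ∃ q : ℚ, (q : ℝ) = ν₁ ^ 4)
    (hν₂Q : ∃ q : ℚ, (q : ℝ) = ν₂ ^ 4)
    (hratio : ∃ q : ℚ, (q : ℝ) = ν₂ ^ 2 / ν₁ ^ 2)
    (j₁ j₂ : ℕ) (hj₁ : 0 < j₁) (hj₂ : 0 < j₂)
    (hneq : ν₁ * (j₁ : ℝ) ≠ ν₂ * (j₂ : ℝ))
    (hμ : 0 < μ) (hm : 0 < m)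
    (hμ2 : ∃ q : ℚ, (q : ℝ) = μ ^ 2)
    (hm2 : ∃ q : ℚ, (q : ℝ) = m ^ 2)
    (hirr : Irrational (m / μ)) :
    Irrational ((μ * ν₁ ^ 4 * (j₁ : ℝ) ^ 4 + m) / (μ * ν₂ ^ 4 * (j₂ : ℝ) ^ 4 + m)) := by
  obtain ⟨qa, hqa⟩ := hν₁Q
  obtain ⟨qb, hqb⟩ := hν₂Q
  rintro ⟨q, hq⟩
  have hj₁' : (0:ℝ) < (j₁:ℝ) := by exact_mod_cast hj₁
  have hj₂' : (0:ℝ) < (j₂:ℝ) := by exact_mod_cast hj₂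
  have hbpos : (0:ℝ) < μ * ν₂ ^ 4 * (j₂:ℝ)^4 + m := by positivity
  have heq : μ * ν₁ ^ 4 * (j₁ : ℝ) ^ 4 + m = q * (μ * ν₂ ^ 4 * (j₂ : ℝ) ^ 4 + m) := by
    field_simp at hq
    linarith [hq]
  by_cases hq1 : (q : ℝ) = 1
  · rw [hq1, one_mul] at heq
    have hab : ν₁ ^ 4 * (j₁ : ℝ) ^ 4 = ν₂ ^ 4 * (j₂ : ℝ) ^ 4 := by
      have := mul_left_cancel₀ (ne_of_gt hμ) (by linarith : μ * (ν₁ ^ 4 * (j₁:ℝ)^4) = μ * (ν₂ ^ 4 * (j₂:ℝ)^4))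
      exact this
    have h4 : (ν₁ * (j₁:ℝ)) ^ 4 = (ν₂ * (j₂:ℝ)) ^ 4 := by ring_nf; ring_nf at hab; linarith
    exact hneq ((pow_left_strictMonoOn₀ (n:=4) (by norm_num)).injOn
      (by positivity : (0:ℝ) ≤ ν₁ * (j₁:ℝ)) (by positivity : (0:ℝ) ≤ ν₂ * (j₂:ℝ)) h4)
  · apply hirr
    refine ⟨(qa * (j₁:ℚ)^4 - q * (qb * (j₂:ℚ)^4)) / (q - 1), ?_⟩
    have hq1' : (q:ℝ) - 1 ≠ 0 := by intro h; apply hq1; linarith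
    push_cast
    rw [div_eq_div_iff hq1' (ne_of_gt hμ)]
    rw [hqa, hqb]
    nlinarith [heq]
end

section
/- Fix real numbers ν₁, ν₂ > 0 such that ν₂⁴/ν₁⁴ is rational but ν₂²/ν₁² is irrational, positive integers j₁*, j₂*, and reals μ > 0, m > 0 with μν₁⁴ rational and m rational. Let r = ((μν₁⁴(j₁*)⁴ + m)/(μν₂⁴(j₂*)⁴ + m))^(1/2), and assume r is irrational and (ν₁²/ν₂²)·r is irrational. Then the three real numbers ω₁/ω₂, ν₂²/ν₁², and 1 are rationally independent: whenever a, b, c ∈ ℚ satisfy a·(ω₁/ω₂) + b·(ν₂²/ν₁²) + c = 0, one has a = b = c = 0. -/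
/-- Rational independence of `ω₁/ω₂`, `ν₂²/ν₁²` and `1` in the case where `ν₂²/ν₁²`
is irrational (from the proof of Lemma 2.2). -/
theorem rationally_independent
    (ν₁ ν₂ μ m : ℝ) (hν₁ : 0 < ν₁) (hν₂ : 0 < ν₂)
    (hratio4 : ∃ q : ℚ, (q : ℝ) = ν₂ ^ 4 / ν₁ ^ 4)
    (hratio2 : Irrational (ν₂ ^ 2 / ν₁ ^ 2))
    (j₁ j₂ : ℕ) (hj₁ : 0 < j₁) (hj₂ : 0 < j₂)
    (hμ : 0 < μ) (hm : 0 < m)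
    (hμν : ∃ q : ℚ, (q : ℝ) = μ * ν₁ ^ 4)
    (hmQ : ∃ q : ℚ, (q : ℝ) = m)
    (hr : Irrational (Real.sqrt ((μ * ν₁ ^ 4 * (j₁ : ℝ) ^ 4 + m) /
      (μ * ν₂ ^ 4 * (j₂ : ℝ) ^ 4 + m))))
    (hr' : Irrational ((ν₁ ^ 2 / ν₂ ^ 2) * Real.sqrt ((μ * ν₁ ^ 4 * (j₁ : ℝ) ^ 4 + m) /
      (μ * ν₂ ^ 4 * (j₂ : ℝ) ^ 4 + m)))) :
    ∀ a b c : ℚ,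
      (a : ℝ) * (Real.sqrt ((μ * ν₁ ^ 4 * (j₁ : ℝ) ^ 4 + m) / (j₁ : ℝ) ^ 2) /
          Real.sqrt ((μ * ν₂ ^ 4 * (j₂ : ℝ) ^ 4 + m) / (j₂ : ℝ) ^ 2)) +
        (b : ℝ) * (ν₂ ^ 2 / ν₁ ^ 2) + (c : ℝ) = 0 →
      a = 0 ∧ b = 0 ∧ c = 0 := by
  intro a b c h
  set A : ℝ := μ * ν₁ ^ 4 * (j₁ : ℝ) ^ 4 + m with hAdef
  set B : ℝ := μ * ν₂ ^ 4 * (j₂ : ℝ) ^ 4 + m with hBdef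
  have hj₁R : (0:ℝ) < (j₁:ℝ) := by exact_mod_cast hj₁
  have hj₂R : (0:ℝ) < (j₂:ℝ) := by exact_mod_cast hj₂
  have hA : (0:ℝ) < A := by positivity
  have hB : (0:ℝ) < B := by positivity
  set r : ℝ := Real.sqrt (A / B) with hrdef
  set t : ℝ := ν₂ ^ 2 / ν₁ ^ 2 with htdef
  have ht0 : t ≠ 0 := by
    have : (0:ℝ) < t := by positivity
    linarith
  -- rewrite the frequency ratio
  have hω : Real.sqrt (A / (j₁ : ℝ) ^ 2) / Real.sqrt (B / (j₂ : ℝ) ^ 2)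
      = ((j₂:ℝ)/(j₁:ℝ)) * r := by
    rw [hrdef, Real.sqrt_div hA.le, Real.sqrt_div hA.le, Real.sqrt_div hB.le,
      Real.sqrt_sq hj₁R.le, Real.sqrt_sq hj₂R.le]
    have hsB : (0:ℝ) < Real.sqrt B := Real.sqrt_pos.mpr hB
    field_simp
  rw [hω] at h
  have h' : (a:ℝ) * ((j₂:ℝ)/(j₁:ℝ)) * r + (b:ℝ) * t + (c:ℝ) = 0 := by
    linarith [h]
  -- rationality data
  obtain ⟨q4, hq4⟩ := hratio4
  obtain ⟨qμ, hqμ⟩ := hμν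
  obtain ⟨qm, hqm⟩ := hmQ
  have ht2 : t ^ 2 = (q4 : ℝ) := by
    rw [hq4, htdef]; field_simp
  have hAq : ((qμ * (j₁:ℚ)^4 + qm : ℚ) : ℝ) = A := by
    push_cast
    rw [hqμ, hqm]
  have hBq : ((qμ * q4 * (j₂:ℚ)^4 + qm : ℚ) : ℝ) = B := by
    push_cast
    rw [hqμ, hqm, hq4, hBdef]
    field_simp
  set qA : ℚ := qμ * (j₁:ℚ)^4 + qm
  set qB : ℚ := qμ * q4 * (j₂:ℚ)^4 + qm
  have hqB0 : qB ≠ 0 := by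
    intro h0
    rw [h0] at hBq
    simp at hBq
    linarith
  have hr2 : r ^ 2 = ((qA / qB : ℚ) : ℝ) := by
    rw [hrdef, Real.sq_sqrt (by positivity)]
    push_cast
    rw [hAq, hBq]
  -- case a = 0
  by_cases ha : a = 0
  · subst ha
    simp at h'
    by_cases hb : b = 0
    · subst hb
      simp at h'
      exact ⟨rfl, rfl, by exact_mod_cast h'⟩
    · exfalso
      apply hratio2 ⟨-c / b, ?_⟩
      push_cast
      rw [div_eq_iff (by exact_mod_cast hb : (b:ℝ) ≠ 0)]
      rw [htdef] at h'
      linarith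
  · exfalso
    set α : ℚ := a * ((j₂:ℚ)/(j₁:ℚ)) with hαdef
    have hα0 : α ≠ 0 := by
      apply mul_ne_zero ha
      exact div_ne_zero (Nat.cast_ne_zero.mpr (by omega)) (Nat.cast_ne_zero.mpr (by omega))
    have hαR : ((α:ℚ):ℝ) = (a:ℝ) * ((j₂:ℝ)/(j₁:ℝ)) := by rw [hαdef]; push_cast; ring
    have h'' : (α:ℝ) * r + (b:ℝ) * t + (c:ℝ) = 0 := by rw [hαR]; linarith
    have key : (α:ℝ)^2 * r^2 = (b:ℝ)^2 * t^2 + 2*(b:ℝ)*(c:ℝ)*t + (c:ℝ)^2 := by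
      linear_combination ((α:ℝ) * r - (b:ℝ)*t - (c:ℝ)) * h''
    have hbc : b = 0 ∨ c = 0 := by
      by_contra hbc
      push_neg at hbc
      obtain ⟨hb, hc⟩ := hbc
      apply hratio2 ⟨(α^2 * (qA/qB) - b^2 * q4 - c^2) / (2*b*c), ?_⟩
      have hr2' : (qA:ℝ)/(qB:ℝ) = r^2 := by rw [hr2]; push_cast; ring
      push_cast
      rw [div_eq_iff (mul_ne_zero (mul_ne_zero two_ne_zero (by exact_mod_cast hb)) (by exact_mod_cast hc) : (2*(b:ℝ)*(c:ℝ)) ≠ 0)]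
      rw [hr2', ← ht2]
      linarith [key]
    rcases hbc with hb | hc
    · -- b = 0 : r rational, contradiction with hr
      subst hb
      apply hr ⟨-c / α, ?_⟩
      push_cast
      rw [div_eq_iff (by exact_mod_cast hα0 : (α:ℝ) ≠ 0)]
      simp at h''
      linarith
    · -- c = 0 : (ν₁²/ν₂²) * r rational, contradiction with hr'
      subst hc
      apply hr' ⟨-b / α, ?_⟩
      push_cast
      have : (ν₁ ^ 2 / ν₂ ^ 2) = t⁻¹ := by rw [htdef]; field_simp
      rw [this, div_eq_iff (by exact_mod_cast hα0 : (α:ℝ) ≠ 0)]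
      simp at h''
      field_simp
      linarith [h'']
end

section
/- Let μ > 0, m > 0, ν₁ > 0, ν₂ > 0 and C > 0 be real numbers. For every (j₁, j₂) ∈ ℤ² with j₁² + j₂² ≥ (2C² + 1)/(μ·(min(ν₁, ν₂))⁴), every ω = (ω₁, ω₂) ∈ ℝ² with ω₁² + ω₂² ≤ C², and every α, γ ∈ ℝ, one has |Θ(j, ω, α, γ)| ≥ j₁² + j₂², where |·| denotes the complex modulus. -/
/-!
For `‖ω‖ ≤ C` the only term of `Re Θ` that can be negative is `-(ω·j)² ≥ -C²|j|²`
(Cauchy–Schwarz), whereas `ν₁²j₁² + ν₂²j₂² ≥ (min ν₁ ν₂)² |j|²` makes the fourth-order term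
`μ (ν₁²j₁² + ν₂²j₂²)²` at least `μ (min ν₁ ν₂)⁴ |j|⁴ ≥ (2C² + 1)|j|²` on the given range of `j`.
Hence `‖Θ‖ ≥ Re Θ ≥ (C² + 1)|j|² ≥ |j|²`.
-/

/-- The symbol `Θ(j, ω, α, γ)` of the linear operator `L_{ω,α,γ}`. -/
noncomputable def Theta (μ m ν₁ ν₂ : ℝ) (j₁ j₂ : ℤ) (ω₁ ω₂ α γ : ℝ) : ℂ :=
  ((-(ω₁ * (j₁ : ℝ) + ω₂ * (j₂ : ℝ)) ^ 2 +
      μ * (ν₁ ^ 2 * (j₁ : ℝ) ^ 2 + ν₂ ^ 2 * (j₂ : ℝ) ^ 2) ^ 2 + m : ℝ) : ℂ) +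
    Complex.I * ((α * (ω₁ * (j₁ : ℝ) + ω₂ * (j₂ : ℝ)) +
      γ * (ω₁ * (j₁ : ℝ) + ω₂ * (j₂ : ℝ)) *
        (ν₁ ^ 2 * (j₁ : ℝ) ^ 2 + ν₂ ^ 2 * (j₂ : ℝ) ^ 2) ^ 2 : ℝ) : ℂ)

section OrderedRing

variable {R : Type*} [CommRing R] [LinearOrder R] [IsStrictOrderedRing R]

theorem sq_mul_add_mul_le_mul_sq_add_sq (a b x y : R) :
    (a * x + b * y) ^ 2 ≤ (a ^ 2 + b ^ 2) * (x ^ 2 + y ^ 2) :=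
  sub_nonneg.mp <| by
    rw [show (a ^ 2 + b ^ 2) * (x ^ 2 + y ^ 2) - (a * x + b * y) ^ 2 = (a * y - b * x) ^ 2 by ring]
    exact sq_nonneg _

theorem mul_sq_add_sq_le_of_le_of_le {c p q : R} (hp : c ≤ p) (hq : c ≤ q) (x y : R) :
    c * (x ^ 2 + y ^ 2) ≤ p * x ^ 2 + q * y ^ 2 := by
  rw [mul_add]
  exact add_le_add (mul_le_mul_of_nonneg_right hp (sq_nonneg x))
    (mul_le_mul_of_nonneg_right hq (sq_nonneg y))

end OrderedRing

theorem Theta_re (μ m ν₁ ν₂ : ℝ) (j₁ j₂ : ℤ) (ω₁ ω₂ α γ : ℝ) :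
    (Theta μ m ν₁ ν₂ j₁ j₂ ω₁ ω₂ α γ).re =
      -(ω₁ * j₁ + ω₂ * j₂) ^ 2 + μ * (ν₁ ^ 2 * j₁ ^ 2 + ν₂ ^ 2 * j₂ ^ 2) ^ 2 + m := by
  simp only [Theta, Complex.add_re, Complex.ofReal_re, Complex.mul_re, Complex.I_re,
    Complex.I_im, Complex.ofReal_im]
  ring

theorem Theta_lower_bound_general
    (μ m ν₁ ν₂ C : ℝ) (hμ : 0 < μ) (hm : 0 < m) (hν₁ : 0 < ν₁) (hν₂ : 0 < ν₂)
    (j₁ j₂ : ℤ)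
    (hj : (2 * C ^ 2 + 1) / (μ * (min ν₁ ν₂) ^ 4) ≤ (j₁ : ℝ) ^ 2 + (j₂ : ℝ) ^ 2)
    (ω₁ ω₂ : ℝ) (hω : ω₁ ^ 2 + ω₂ ^ 2 ≤ C ^ 2)
    (α γ : ℝ) :
    (j₁ : ℝ) ^ 2 + (j₂ : ℝ) ^ 2 ≤ ‖Theta μ m ν₁ ν₂ j₁ j₂ ω₁ ω₂ α γ‖ := by
  set n := min ν₁ ν₂
  set r : ℝ := (j₁ : ℝ) ^ 2 + (j₂ : ℝ) ^ 2
  have hn : 0 < n := lt_min hν₁ hν₂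
  have hr : 0 ≤ r := by positivity
  have hdot : (ω₁ * j₁ + ω₂ * j₂) ^ 2 ≤ C ^ 2 * r :=
    (sq_mul_add_mul_le_mul_sq_add_sq _ _ _ _).trans (mul_le_mul_of_nonneg_right hω hr)
  have hweight : n ^ 2 * r ≤ ν₁ ^ 2 * j₁ ^ 2 + ν₂ ^ 2 * j₂ ^ 2 :=
    mul_sq_add_sq_le_of_le_of_le (pow_le_pow_left₀ hn.le (min_le_left _ _) 2)
      (pow_le_pow_left₀ hn.le (min_le_right _ _) 2) _ _
  have hquartic : (2 * C ^ 2 + 1) * r ≤ μ * (ν₁ ^ 2 * j₁ ^ 2 + ν₂ ^ 2 * j₂ ^ 2) ^ 2 :=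
    calc (2 * C ^ 2 + 1) * r ≤ μ * n ^ 4 * r * r :=
          mul_le_mul_of_nonneg_right ((div_le_iff₀' (by positivity)).mp hj) hr
      _ = μ * (n ^ 2 * r) ^ 2 := by ring
      _ ≤ _ := mul_le_mul_of_nonneg_left (pow_le_pow_left₀ (by positivity) hweight 2) hμ.le
  calc r ≤ (Theta μ m ν₁ ν₂ j₁ j₂ ω₁ ω₂ α γ).re := by
        rw [Theta_re]; linarith [mul_nonneg (sq_nonneg C) hr]
    _ ≤ _ := Complex.re_le_norm _

/-- Lower bound on the modulus of the symbol `Θ` for large frequencies (from the proof of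
Lemma 3.1 of the paper). -/
theorem Theta_lower_bound
    (μ m ν₁ ν₂ C : ℝ) (hμ : 0 < μ) (hm : 0 < m) (hν₁ : 0 < ν₁) (hν₂ : 0 < ν₂)
    (hC : 0 < C)
    (j₁ j₂ : ℤ)
    (hj : (2 * C ^ 2 + 1) / (μ * (min ν₁ ν₂) ^ 4) ≤ (j₁ : ℝ) ^ 2 + (j₂ : ℝ) ^ 2)
    (ω₁ ω₂ : ℝ) (hω : ω₁ ^ 2 + ω₂ ^ 2 ≤ C ^ 2)
    (α γ : ℝ) :
    (j₁ : ℝ) ^ 2 + (j₂ : ℝ) ^ 2 ≤ ‖Theta μ m ν₁ ν₂ j₁ j₂ ω₁ ω₂ α γ‖ :=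
  Theta_lower_bound_general μ m ν₁ ν₂ C hμ hm hν₁ hν₂ j₁ j₂ hj ω₁ ω₂ hω α γ
end

section
/- Let ν₁ > 0, ν₂ > 0 be real numbers and j₁*, j₂* positive integers. Then the set of pairs (j₁, j₂) ∈ ℤ² satisfying ν₁⁴(j₂*)²j₁⁶ + ν₂⁴(j₁*)²j₂⁶ + (ν₁⁴(j₁*)² + 2ν₁²ν₂²(j₂*)²)j₁⁴j₂² + (ν₂⁴(j₂*)² + 2ν₁²ν₂²(j₁*)²)j₁²j₂⁴ − 2ν₁⁴(j₁*)²(j₂*)²j₁⁴ − 2ν₂⁴(j₁*)²(j₂*)²j₂⁴ + (ν₁²(j₁*)² − ν₂²(j₂*)²)²j₁²j₂² + ν₁⁴(j₁*)⁴(j₂*)²j₁² + ν₂⁴(j₁*)²(j₂*)⁴j₂² = 0 is exactly {(0, 0), (j₁*, 0), (−j₁*, 0), (0, j₂*), (0, −j₂*)}. -/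
/-- The Diophantine equation (2.13) of the paper has exactly the five integer solutions
`(0,0)`, `(±j₁*, 0)`, `(0, ±j₂*)`. -/
theorem diophantine_solutions
    (ν₁ ν₂ : ℝ) (hν₁ : 0 < ν₁) (hν₂ : 0 < ν₂)
    (j₁ j₂ : ℕ) (hj₁ : 0 < j₁) (hj₂ : 0 < j₂) :
    {j : ℤ × ℤ |
        ν₁ ^ 4 * (j₂ : ℝ) ^ 2 * (j.1 : ℝ) ^ 6 + ν₂ ^ 4 * (j₁ : ℝ) ^ 2 * (j.2 : ℝ) ^ 6 +
            (ν₁ ^ 4 * (j₁ : ℝ) ^ 2 + 2 * ν₁ ^ 2 * ν₂ ^ 2 * (j₂ : ℝ) ^ 2) *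
              (j.1 : ℝ) ^ 4 * (j.2 : ℝ) ^ 2 +
            (ν₂ ^ 4 * (j₂ : ℝ) ^ 2 + 2 * ν₁ ^ 2 * ν₂ ^ 2 * (j₁ : ℝ) ^ 2) *
              (j.1 : ℝ) ^ 2 * (j.2 : ℝ) ^ 4 -
            2 * ν₁ ^ 4 * (j₁ : ℝ) ^ 2 * (j₂ : ℝ) ^ 2 * (j.1 : ℝ) ^ 4 -
            2 * ν₂ ^ 4 * (j₁ : ℝ) ^ 2 * (j₂ : ℝ) ^ 2 * (j.2 : ℝ) ^ 4 +
            (ν₁ ^ 2 * (j₁ : ℝ) ^ 2 - ν₂ ^ 2 * (j₂ : ℝ) ^ 2) ^ 2 *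
              (j.1 : ℝ) ^ 2 * (j.2 : ℝ) ^ 2 +
            ν₁ ^ 4 * (j₁ : ℝ) ^ 4 * (j₂ : ℝ) ^ 2 * (j.1 : ℝ) ^ 2 +
            ν₂ ^ 4 * (j₁ : ℝ) ^ 2 * (j₂ : ℝ) ^ 4 * (j.2 : ℝ) ^ 2 = 0} =
      {(0, 0), ((j₁ : ℤ), 0), (-(j₁ : ℤ), 0), (0, (j₂ : ℤ)), (0, -(j₂ : ℤ))} := by
  ext ⟨x, y⟩
  simp only [Set.mem_setOf_eq, Set.mem_insert_iff, Set.mem_singleton_iff, Prod.mk.injEq]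
  constructor
  · intro h
    have key : (j₂ : ℝ) ^ 2 * (x : ℝ) ^ 2 * (ν₁ ^ 2 * (x : ℝ) ^ 2 + ν₂ ^ 2 * (y : ℝ) ^ 2 - ν₁ ^ 2 * (j₁ : ℝ) ^ 2) ^ 2
        + (j₁ : ℝ) ^ 2 * (y : ℝ) ^ 2 * (ν₁ ^ 2 * (x : ℝ) ^ 2 + ν₂ ^ 2 * (y : ℝ) ^ 2 - ν₂ ^ 2 * (j₂ : ℝ) ^ 2) ^ 2
        + (ν₁ ^ 2 * (j₁ : ℝ) ^ 2 + ν₂ ^ 2 * (j₂ : ℝ) ^ 2) ^ 2 * (x : ℝ) ^ 2 * (y : ℝ) ^ 2 = 0 := by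
      rw [← h]; ring
    have h1 : (0:ℝ) ≤ (j₂ : ℝ) ^ 2 * (x : ℝ) ^ 2 * (ν₁ ^ 2 * (x : ℝ) ^ 2 + ν₂ ^ 2 * (y : ℝ) ^ 2 - ν₁ ^ 2 * (j₁ : ℝ) ^ 2) ^ 2 := by positivity
    have h2 : (0:ℝ) ≤ (j₁ : ℝ) ^ 2 * (y : ℝ) ^ 2 * (ν₁ ^ 2 * (x : ℝ) ^ 2 + ν₂ ^ 2 * (y : ℝ) ^ 2 - ν₂ ^ 2 * (j₂ : ℝ) ^ 2) ^ 2 := by positivity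
    have h3 : (0:ℝ) ≤ (ν₁ ^ 2 * (j₁ : ℝ) ^ 2 + ν₂ ^ 2 * (j₂ : ℝ) ^ 2) ^ 2 * (x : ℝ) ^ 2 * (y : ℝ) ^ 2 := by positivity
    have hj1R : (0:ℝ) < (j₁ : ℝ) := by exact_mod_cast hj₁
    have hj2R : (0:ℝ) < (j₂ : ℝ) := by exact_mod_cast hj₂
    have e1 : (j₂ : ℝ) ^ 2 * (x : ℝ) ^ 2 * (ν₁ ^ 2 * (x : ℝ) ^ 2 + ν₂ ^ 2 * (y : ℝ) ^ 2 - ν₁ ^ 2 * (j₁ : ℝ) ^ 2) ^ 2 = 0 := by linarith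
    have e2 : (j₁ : ℝ) ^ 2 * (y : ℝ) ^ 2 * (ν₁ ^ 2 * (x : ℝ) ^ 2 + ν₂ ^ 2 * (y : ℝ) ^ 2 - ν₂ ^ 2 * (j₂ : ℝ) ^ 2) ^ 2 = 0 := by linarith
    have e3 : (ν₁ ^ 2 * (j₁ : ℝ) ^ 2 + ν₂ ^ 2 * (j₂ : ℝ) ^ 2) ^ 2 * (x : ℝ) ^ 2 * (y : ℝ) ^ 2 = 0 := by linarith
    have hc : (ν₁ ^ 2 * (j₁ : ℝ) ^ 2 + ν₂ ^ 2 * (j₂ : ℝ) ^ 2) ^ 2 ≠ 0 := by positivity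
    have hxy : (x : ℝ) * (y : ℝ) = 0 := by
      have hp : (ν₁ ^ 2 * (j₁ : ℝ) ^ 2 + ν₂ ^ 2 * (j₂ : ℝ) ^ 2) ^ 2 * ((x : ℝ) * (y : ℝ)) ^ 2 = 0 := by
        rw [← e3]; ring
      exact sq_eq_zero_iff.1 ((mul_eq_zero.1 hp).resolve_left hc)
    rcases mul_eq_zero.1 hxy with hX | hY
    · -- (x : ℝ) = 0, so x = 0
      have hx0 : x = 0 := by exact_mod_cast hX
      subst hx0
      -- e2 becomes j₁² (y : ℝ)² (ν₂² (y : ℝ)² - ν₂² j₂²)² = 0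
      rw [hX] at e2
      have hfac : (y : ℝ) ^ 2 * ((y : ℝ) ^ 2 - (j₂ : ℝ) ^ 2) ^ 2 = 0 := by
        have hne : (j₁ : ℝ) ^ 2 * ν₂ ^ 4 ≠ 0 := by positivity
        have : (j₁ : ℝ) ^ 2 * ν₂ ^ 4 * ((y : ℝ) ^ 2 * ((y : ℝ) ^ 2 - (j₂ : ℝ) ^ 2) ^ 2) = 0 := by
          rw [← e2]; ring
        exact (mul_eq_zero.1 this).resolve_left hne
      rcases mul_eq_zero.1 hfac with hY0 | hY2
      · have : (y : ℝ) = 0 := by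
          have := sq_eq_zero_iff.1 hY0; exact this
        have : y = 0 := by exact_mod_cast this
        exact Or.inl ⟨rfl, this⟩
      · have hsq : (y : ℝ) ^ 2 = (j₂ : ℝ) ^ 2 := by
          have := sq_eq_zero_iff.1 hY2; linarith
        have hsqZ : y ^ 2 = (j₂ : ℤ) ^ 2 := by exact_mod_cast hsq
        rcases sq_eq_sq_iff_eq_or_eq_neg.1 hsqZ with h' | h'
        · exact Or.inr (Or.inr (Or.inr (Or.inl ⟨rfl, h'⟩)))
        · exact Or.inr (Or.inr (Or.inr (Or.inr ⟨rfl, h'⟩)))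
    · -- (y : ℝ) = 0, so y = 0
      have hy0 : y = 0 := by exact_mod_cast hY
      subst hy0
      rw [hY] at e1
      have hfac : (x : ℝ) ^ 2 * ((x : ℝ) ^ 2 - (j₁ : ℝ) ^ 2) ^ 2 = 0 := by
        have hne : (j₂ : ℝ) ^ 2 * ν₁ ^ 4 ≠ 0 := by positivity
        have : (j₂ : ℝ) ^ 2 * ν₁ ^ 4 * ((x : ℝ) ^ 2 * ((x : ℝ) ^ 2 - (j₁ : ℝ) ^ 2) ^ 2) = 0 := by
          rw [← e1]; ring
        exact (mul_eq_zero.1 this).resolve_left hne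
      rcases mul_eq_zero.1 hfac with hX0 | hX2
      · have : (x : ℝ) = 0 := sq_eq_zero_iff.1 hX0
        have : x = 0 := by exact_mod_cast this
        exact Or.inl ⟨this, rfl⟩
      · have hsq : (x : ℝ) ^ 2 = (j₁ : ℝ) ^ 2 := by
          have := sq_eq_zero_iff.1 hX2; linarith
        have hsqZ : x ^ 2 = (j₁ : ℤ) ^ 2 := by exact_mod_cast hsq
        rcases sq_eq_sq_iff_eq_or_eq_neg.1 hsqZ with h' | h'
        · exact Or.inr (Or.inl ⟨h', rfl⟩)
        · exact Or.inr (Or.inr (Or.inl ⟨h', rfl⟩))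
  · rintro (⟨hx, hy⟩ | ⟨hx, hy⟩ | ⟨hx, hy⟩ | ⟨hx, hy⟩ | ⟨hx, hy⟩) <;> subst hx <;> subst hy <;>
      push_cast <;> ring
end
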